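/- Gram matrix of the Fourier feature matrix on the regular grid: let n ≥ 1, let B be an odd positive integer with 2n dividing B−1, let x_i = −1 + 2i/n for i = 1,…,n, and let Φ ∈ ℝ^{n×B} be the matrix with rows φ(x_i). Then Φ·Φᵀ = ((B−1)/2)·I_n + (1/2)·J_n, where I_n is the identity and J_n is the all-ones n×n matrix. In particular every eigenvalue of ΦΦᵀ is at least (B−1)/2, so the smallest singular value of Φ is at least √((B−1)/2). -/

import Mathlib

open Matrix

/-- The lifted Fourier feature map `φ : ℝ → ℝ^B`,
`φ(x) = (1/√2, sin (π x), cos (π x), …, sin (((B-1)/2) π x), cos (((B-1)/2) π x))`. -/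
noncomputable def phiF (B : ℕ) (x : ℝ) : Fin B → ℝ := fun j =>
  if j.val = 0 then 1 / Real.sqrt 2
  else if j.val % 2 = 1 then Real.sin ((((j.val + 1) / 2 : ℕ) : ℝ) * Real.pi * x)
  else Real.cos (((j.val / 2 : ℕ) : ℝ) * Real.pi * x)

/-- The `n` regularly spaced training points `x_i = -1 + 2 i / n`, `i = 1, …, n`. -/
noncomputable def xtr (n : ℕ) (i : Fin n) : ℝ := -1 + 2 * ((i : ℕ) + 1 : ℝ) / (n : ℝ)

/-- The `n × B` Fourier feature matrix with rows `φ(x_i)`. -/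
noncomputable def PhiM (n B : ℕ) : Matrix (Fin n) (Fin B) ℝ :=
  Matrix.of fun i j => phiF B (xtr n i) j

noncomputable def gF (x : ℝ) (j : ℕ) : ℝ :=
  if j = 0 then 1 / Real.sqrt 2
  else if j % 2 = 1 then Real.sin ((((j + 1) / 2 : ℕ) : ℝ) * Real.pi * x)
  else Real.cos (((j / 2 : ℕ) : ℝ) * Real.pi * x)

lemma gF_inner (M : ℕ) (x y : ℝ) :
    ∑ j ∈ Finset.range (2*M+1), gF x j * gF y j =
      1/2 + ∑ m ∈ Finset.range M, Real.cos (((m:ℝ)+1) * Real.pi * (x - y)) := by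
  induction M with
  | zero =>
    simp [gF]
    rw [← mul_inv, Real.mul_self_sqrt (by norm_num)]
  | succ M ih =>
    have h1 : 2*(M+1)+1 = (2*M+1) + 1 + 1 := by ring
    rw [h1, Finset.sum_range_succ, Finset.sum_range_succ, ih, Finset.sum_range_succ]
    have ho : gF x (2*M+1) = Real.sin (((M:ℝ)+1) * Real.pi * x) := by
      have h2 : (2*M+1) % 2 = 1 := by omega
      have h3 : (2*M+1+1)/2 = M+1 := by omega
      simp [gF, h2, h3]
    have he : ∀ z, gF z (2*M+1+1) = Real.cos (((M:ℝ)+1) * Real.pi * z) := by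
      intro z
      have h2 : (2*M+1+1) % 2 = 0 := by omega
      have h3 : (2*M+1+1)/2 = M+1 := by omega
      simp [gF, h2, h3]
    have ho' : gF y (2*M+1) = Real.sin (((M:ℝ)+1) * Real.pi * y) := by
      have h2 : (2*M+1) % 2 = 1 := by omega
      have h3 : (2*M+1+1)/2 = M+1 := by omega
      simp [gF, h2, h3]
    rw [ho, ho', he, he]
    have := Real.cos_sub (((M:ℝ)+1) * Real.pi * x) (((M:ℝ)+1) * Real.pi * y)
    rw [show ((M:ℝ)+1) * Real.pi * (x-y) = ((M:ℝ)+1) * Real.pi * x - ((M:ℝ)+1) * Real.pi * y by ring, this]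
    ring

lemma cos_block_sum (n K : ℕ) (hn : 0 < n) (d : ℤ) (hd : ¬ ((n:ℤ) ∣ d)) :
    ∑ m ∈ Finset.range (K*n), Real.cos (((m:ℝ)+1) * (2 * Real.pi * (d:ℝ) / (n:ℝ))) = 0 := by
  set θ : ℝ := 2 * Real.pi * (d:ℝ) / (n:ℝ) with hθ
  set z : ℂ := Complex.exp (θ * Complex.I) with hz
  have hn0 : (n:ℂ) ≠ 0 := by exact_mod_cast Nat.cast_ne_zero.mpr hn.ne'
  have hzn : z ^ n = 1 := by
    rw [hz, ← Complex.exp_nat_mul]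
    have : (n:ℂ) * (↑θ * Complex.I) = (d:ℂ) * (2 * ↑Real.pi * Complex.I) := by
      rw [hθ]; push_cast; field_simp
    rw [this]
    exact_mod_cast Complex.exp_int_mul_two_pi_mul_I d
  have hz1 : z ≠ 1 := by
    rw [hz, Ne, Complex.exp_eq_one_iff]
    rintro ⟨m, hm⟩
    apply hd
    have hπ : (2 : ℂ) * Real.pi * Complex.I ≠ 0 := by
      simp [Real.pi_ne_zero, Complex.I_ne_zero]
    have : (d:ℂ) = (m:ℂ) * n := by
      have h2 : (↑θ * Complex.I) * n = ((m:ℂ) * n) * (2 * ↑Real.pi * Complex.I) := by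
        rw [hm]; ring
      have h3 : (↑θ * Complex.I) * n = (d:ℂ) * (2 * ↑Real.pi * Complex.I) := by
        rw [hθ]; push_cast; field_simp
      rw [h3] at h2
      exact mul_right_cancel₀ hπ h2
    have h4 : d = m * n := by exact_mod_cast this
    exact ⟨m, by rw [h4]; ring⟩
  have hgeom : ∑ m ∈ Finset.range (K*n), z ^ (m+1) = 0 := by
    have : ∑ m ∈ Finset.range (K*n), z ^ (m+1) = z * ∑ m ∈ Finset.range (K*n), z ^ m := by
      rw [Finset.mul_sum]
      exact Finset.sum_congr rfl fun m _ => by ring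
    rw [this, geom_sum_eq hz1, pow_mul', hzn, one_pow]
    simp
  have hre : ∀ m : ℕ, Real.cos (((m:ℝ)+1) * θ) = (z ^ (m+1)).re := by
    intro m
    rw [hz, ← Complex.exp_nat_mul]
    rw [show ((m+1 : ℕ):ℂ) * (↑θ * Complex.I) = ((((m:ℝ)+1) * θ : ℝ) : ℂ) * Complex.I by push_cast; ring]
    rw [Complex.exp_ofReal_mul_I_re]
  calc ∑ m ∈ Finset.range (K*n), Real.cos (((m:ℝ)+1) * θ)
      = ∑ m ∈ Finset.range (K*n), (z ^ (m+1)).re := Finset.sum_congr rfl fun m _ => hre m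
    _ = (∑ m ∈ Finset.range (K*n), z ^ (m+1)).re := by rw [Complex.re_sum]
    _ = 0 := by rw [hgeom]; simp

lemma gram_entry (n M : ℕ) (hn : 1 ≤ n) (hM : n ∣ M) (i k : Fin n) :
    (PhiM n (2*M+1) * (PhiM n (2*M+1))ᵀ) i k
      = (if i = k then (M:ℝ) else 0) + 1/2 := by
  have hent : (PhiM n (2*M+1) * (PhiM n (2*M+1))ᵀ) i k
      = ∑ j ∈ Finset.range (2*M+1), gF (xtr n i) j * gF (xtr n k) j := by
    rw [Matrix.mul_apply]
    rw [← Fin.sum_univ_eq_sum_range (fun j => gF (xtr n i) j * gF (xtr n k) j) (2*M+1)]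
    rfl
  rw [hent, gF_inner]
  by_cases hik : i = k
  · subst hik
    simp [add_comm]
  · simp only [hik, if_false]
    have hn0 : (n:ℝ) ≠ 0 := by positivity
    set d : ℤ := (i:ℤ) - (k:ℤ) with hd
    have hdiff : xtr n i - xtr n k = 2 * (d:ℝ) / n := by
      rw [xtr, xtr, hd]
      push_cast
      field_simp
      ring
    have hang : ∀ m : ℕ, ((m:ℝ)+1) * Real.pi * (xtr n i - xtr n k)
        = ((m:ℝ)+1) * (2 * Real.pi * (d:ℝ) / (n:ℝ)) := by
      intro m; rw [hdiff]; field_simp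
    obtain ⟨K, hK⟩ := hM
    have hnd : ¬ ((n:ℤ) ∣ d) := by
      intro h
      have hi := i.isLt
      have hk := k.isLt
      have h1 : d = 0 := Int.eq_zero_of_abs_lt_dvd h (by
        rw [hd, abs_lt]; omega)
      apply hik
      have : (i:ℤ) = (k:ℤ) := by omega
      exact Fin.ext (by exact_mod_cast this)
    have := cos_block_sum n K (by omega) d hnd
    rw [Finset.sum_congr rfl (fun m _ => by rw [hang m])]
    rw [hK, Nat.mul_comm n K, this]
    ring

/-- **Gram matrix of the Fourier feature matrix on the regular grid.**  Let `n ≥ 1`, let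
`B` be an odd positive integer with `2n ∣ B - 1`, and let `Φ ∈ ℝ^{n×B}` have rows `φ(x_i)`
at the regular grid points `x_i = -1 + 2i/n`.  Then `Φ Φᵀ = ((B-1)/2) Iₙ + (1/2) Jₙ`,
where `Iₙ` is the identity and `Jₙ` the all-ones matrix.  In particular every eigenvalue of
`Φ Φᵀ` is at least `(B-1)/2`, so the smallest singular value of `Φ` is at least
`√((B-1)/2)`. -/
theorem stmt_17 (n B : ℕ) (hn : 1 ≤ n) (hB : Odd B) (hBpos : 0 < B)
    (hdvd : 2 * n ∣ B - 1) :
    PhiM n B * (PhiM n B)ᵀ =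
        (((B : ℝ) - 1) / 2) • (1 : Matrix (Fin n) (Fin n) ℝ) +
          (1 / 2 : ℝ) • Matrix.of (fun _ _ => (1 : ℝ)) ∧
    (∀ v : Fin n → ℝ,
        (((B : ℝ) - 1) / 2) * ∑ i, (v i) ^ 2 ≤
          ∑ i, v i * ((PhiM n B * (PhiM n B)ᵀ) *ᵥ v) i) ∧
    (∀ v : Fin n → ℝ,
        Real.sqrt (((B : ℝ) - 1) / 2) * Real.sqrt (∑ i, (v i) ^ 2) ≤
          Real.sqrt (∑ j, (v ᵥ* PhiM n B) j ^ 2)) := by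
  obtain ⟨M, hBM⟩ := hB
  have hB2 : B = 2*M+1 := by omega
  subst hB2
  have hM : n ∣ M := by
    have h : 2*n ∣ 2*M := by simpa using hdvd
    exact (Nat.mul_dvd_mul_iff_left (by norm_num : 0 < 2)).mp h
  have hc : (((2*M+1 : ℕ):ℝ) - 1) / 2 = (M:ℝ) := by push_cast; ring
  have hGram : PhiM n (2*M+1) * (PhiM n (2*M+1))ᵀ =
      ((((2*M+1:ℕ) : ℝ) - 1) / 2) • (1 : Matrix (Fin n) (Fin n) ℝ) +
        (1 / 2 : ℝ) • Matrix.of (fun _ _ => (1 : ℝ)) := by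
    ext i k
    rw [gram_entry n M hn hM i k]
    simp only [Matrix.add_apply, Matrix.smul_apply, Matrix.one_apply, Matrix.of_apply,
      smul_eq_mul, hc]
    by_cases h : i = k <;> simp [h]
  have hquad : ∀ v : Fin n → ℝ,
      ∑ i, v i * ((PhiM n (2*M+1) * (PhiM n (2*M+1))ᵀ) *ᵥ v) i
        = (M:ℝ) * ∑ i, (v i)^2 + (1/2) * (∑ i, v i)^2 := by
    intro v
    rw [hGram]
    have hmv : ∀ i, ((((((2*M+1:ℕ) : ℝ) - 1) / 2) • (1 : Matrix (Fin n) (Fin n) ℝ) +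
        (1 / 2 : ℝ) • Matrix.of (fun _ _ => (1 : ℝ))) *ᵥ v) i
          = (M:ℝ) * v i + (1/2) * ∑ k, v k := by
      intro i
      rw [Matrix.add_mulVec, Matrix.smul_mulVec, Matrix.smul_mulVec,
        Matrix.one_mulVec]
      simp [Matrix.mulVec, dotProduct, hc, Finset.mul_sum]
    simp_rw [hmv]
    have hrw : ∀ i, v i * ((M:ℝ) * v i + (1/2) * ∑ k, v k)
        = (M:ℝ) * (v i)^2 + (1/2) * ((∑ k, v k) * v i) := fun i => by ring
    simp_rw [hrw]
    rw [Finset.sum_add_distrib, ← Finset.mul_sum, ← Finset.mul_sum, ← Finset.mul_sum]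
    ring
  have hq2 : ∀ v : Fin n → ℝ,
      ((((2*M+1:ℕ) : ℝ) - 1) / 2) * ∑ i, (v i) ^ 2 ≤
        ∑ i, v i * ((PhiM n (2*M+1) * (PhiM n (2*M+1))ᵀ) *ᵥ v) i := by
    intro v
    rw [hquad v, hc]
    nlinarith [sq_nonneg (∑ i, v i)]
  refine ⟨hGram, hq2, ?_⟩
  intro v
  have key : ∑ j, (v ᵥ* PhiM n (2*M+1)) j ^ 2
      = ∑ i, v i * ((PhiM n (2*M+1) * (PhiM n (2*M+1))ᵀ) *ᵥ v) i := by
    have h1 : ∑ j, (v ᵥ* PhiM n (2*M+1)) j ^ 2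
        = (v ᵥ* PhiM n (2*M+1)) ⬝ᵥ (v ᵥ* PhiM n (2*M+1)) := by
      simp [dotProduct, sq]
    have h2 : ∑ i, v i * ((PhiM n (2*M+1) * (PhiM n (2*M+1))ᵀ) *ᵥ v) i
        = v ⬝ᵥ ((PhiM n (2*M+1) * (PhiM n (2*M+1))ᵀ) *ᵥ v) := rfl
    rw [h1, h2, ← Matrix.mulVec_mulVec, Matrix.dotProduct_mulVec,
      Matrix.mulVec_transpose]
  have hle : ((((2*M+1:ℕ) : ℝ) - 1) / 2) * ∑ i, (v i) ^ 2
      ≤ ∑ j, (v ᵥ* PhiM n (2*M+1)) j ^ 2 := by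
    rw [key]; exact hq2 v
  calc Real.sqrt ((((2*M+1:ℕ) : ℝ) - 1) / 2) * Real.sqrt (∑ i, (v i) ^ 2)
      = Real.sqrt (((((2*M+1:ℕ) : ℝ) - 1) / 2) * ∑ i, (v i) ^ 2) := by
        rw [Real.sqrt_mul (by rw [hc]; positivity)]
    _ ≤ Real.sqrt (∑ j, (v ᵥ* PhiM n (2*M+1)) j ^ 2) := Real.sqrt_le_sqrt hle
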